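/- arXiv:2103.04321 — 3 statements merged into one kernel-verified Lean document; each statement's English description precedes it below -/
import Mathlib

section
/- Let B₁, B₂ ⊆ S^{n-1} (n ≥ 2) be nonempty sets with P₁ := ℙ·B₁ and P₂ := ℙ·B₂ convex and open, and B₁ ∩ B₂ = ∅. Define E := {u ∈ S^{n-1} : ⟨b₁,u⟩ > 0 ∀ b₁ ∈ B₁ and ⟨b₂,u⟩ < 0 ∀ b₂ ∈ B₂}. Then ℝ₊·E := {t·u : t ≥ 0, u ∈ E} ∪ {0} is a pointed, closed, convex cone. -/
/-!
Write `K := {y | ⟪b, y⟫ ≥ 0 on B₁ and ≤ 0 on B₂}`, the inner dual cone of `B₁ ∪ -B₂`; it is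
closed, convex and invariant under positive scaling. The cone `ℝ₊·E` is exactly `K`: an open
set inside the closed half-space `{0 ≤ ⟪·, u⟫}` (`u ≠ 0`) lies in the open half-space, so for
`y ∈ K \ {0}` the weak inequalities of `P₁` and `P₂` against `y / ‖y‖` are strict. The same fact
makes `K` pointed: if `±y ∈ K` with `y ≠ 0`, then `⟪b, y⟫` would be both `> 0` and `≤ 0` for
any `b ∈ B₁`.
-/

open Pointwise
open scoped RealInnerProductSpace

variable {V : Type*} [NormedAddCommGroup V] [InnerProductSpace ℝ V]

theorem inner_pos_of_isOpen_of_forall_inner_nonneg {P : Set V} (hP : IsOpen P) {u : V}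
    (hu : u ≠ 0) (h : ∀ z ∈ P, 0 ≤ ⟪z, u⟫) {z : V} (hz : z ∈ P) : 0 < ⟪z, u⟫ := by
  have hf : innerSL ℝ u ≠ 0 := fun h0 ↦ hu (by simpa using congr($h0 u))
  have hP_pos : innerSL ℝ u '' P ⊆ Set.Ioi 0 := by
    rw [← interior_Ici]
    refine interior_maximal ?_ ((innerSL ℝ u).isOpenMap_of_ne_zero hf P hP)
    rintro _ ⟨z, hz, rfl⟩
    simpa [real_inner_comm] using h z hz
  simpa [real_inner_comm] using hP_pos ⟨z, hz, rfl⟩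

theorem inner_pos_of_isOpen_rays {B : Set V}
    (ho : IsOpen {y : V | ∃ t > (0 : ℝ), ∃ b ∈ B, y = t • b}) {u : V} (hu : u ≠ 0)
    (h : ∀ b ∈ B, 0 ≤ ⟪b, u⟫) {b : V} (hb : b ∈ B) : 0 < ⟪b, u⟫ := by
  refine inner_pos_of_isOpen_of_forall_inner_nonneg ho hu ?_
    ⟨1, one_pos, b, hb, (one_smul ℝ b).symm⟩
  rintro _ ⟨t, ht, b', hb', rfl⟩
  rw [real_inner_smul_left]
  exact mul_nonneg ht.le (h b' hb')

namespace ProperCone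

variable [CompleteSpace V]

theorem mem_innerDual_union_neg {B₁ B₂ : Set V} {u : V} :
    u ∈ innerDual (B₁ ∪ -B₂) ↔ (∀ b ∈ B₁, 0 ≤ ⟪b, u⟫) ∧ ∀ b ∈ B₂, ⟪b, u⟫ ≤ 0 := by
  simp [or_imp, forall_and]

theorem inter_neg_innerDual_eq_zero {B s : Set V} (hB : B.Nonempty) (hBs : B ⊆ s)
    (ho : IsOpen {y : V | ∃ t > (0 : ℝ), ∃ b ∈ B, y = t • b}) :
    (innerDual s : Set V) ∩ -innerDual s = {0} := by
  refine Set.Subset.antisymm ?_ (by simp)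
  rintro y ⟨hy, hy_neg⟩
  by_contra hy0
  obtain ⟨b, hb⟩ := hB
  have hpos := inner_pos_of_isOpen_rays ho hy0 (fun b' hb' ↦ hy (hBs hb')) hb
  have hneg : 0 ≤ ⟪b, -y⟫ := hy_neg (hBs hb)
  rw [inner_neg_right] at hneg
  linarith

theorem setOf_smul_strictInnerDual_eq {B₁ B₂ : Set V}
    (ho₁ : IsOpen {y : V | ∃ t > (0 : ℝ), ∃ b ∈ B₁, y = t • b})
    (ho₂ : IsOpen {y : V | ∃ t > (0 : ℝ), ∃ b ∈ B₂, y = t • b}) :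
    {y : V | ∃ t ≥ (0 : ℝ), ∃ u ∈ {u ∈ Metric.sphere (0 : V) 1 |
        (∀ b ∈ B₁, ⟪b, u⟫ > 0) ∧ (∀ b ∈ B₂, ⟪b, u⟫ < 0)}, y = t • u} ∪ {0} =
      innerDual (B₁ ∪ -B₂) := by
  ext y
  constructor
  · rintro (⟨t, ht, u, ⟨-, hu₁, hu₂⟩, rfl⟩ | rfl)
    · refine (innerDual _).smul_mem (mem_innerDual_union_neg.mpr ⟨?_, ?_⟩) ht
      exacts [fun b hb ↦ (hu₁ b hb).le, fun b hb ↦ (hu₂ b hb).le]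
    · exact (innerDual _).zero_mem
  · intro hy
    rcases eq_or_ne y 0 with rfl | hy0
    · exact Or.inr rfl
    have hu : ‖y‖⁻¹ • y ∈ innerDual (B₁ ∪ -B₂) := (innerDual _).smul_mem hy (by positivity)
    have hu0 : ‖y‖⁻¹ • y ≠ 0 := smul_ne_zero (inv_ne_zero (norm_ne_zero_iff.mpr hy0)) hy0
    obtain ⟨hu₁, hu₂⟩ := mem_innerDual_union_neg.mp hu
    refine Or.inl ⟨‖y‖, norm_nonneg y, ‖y‖⁻¹ • y, ⟨?_, ?_, ?_⟩, ?_⟩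
    · simpa using norm_smul_inv_norm (𝕜 := ℝ) hy0
    · exact fun b hb ↦ inner_pos_of_isOpen_rays ho₁ hu0 hu₁ hb
    · intro b hb
      have hneg := inner_pos_of_isOpen_rays ho₂ (neg_ne_zero.mpr hu0)
        (fun b' hb' ↦ by simpa [inner_neg_right] using hu₂ b' hb') hb
      rwa [inner_neg_right, neg_pos] at hneg
    · rw [smul_inv_smul₀ (norm_ne_zero_iff.mpr hy0)]

end ProperCone

theorem stmt_7_general {n : ℕ} (B₁ B₂ : Set (EuclideanSpace ℝ (Fin n)))
    (hne₁ : B₁.Nonempty)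
    (ho₁ : IsOpen {y : EuclideanSpace ℝ (Fin n) | ∃ t > (0 : ℝ), ∃ b ∈ B₁, y = t • b})
    (ho₂ : IsOpen {y : EuclideanSpace ℝ (Fin n) | ∃ t > (0 : ℝ), ∃ b ∈ B₂, y = t • b})
    (E : Set (EuclideanSpace ℝ (Fin n)))
    (hE : E = {u ∈ Metric.sphere (0 : EuclideanSpace ℝ (Fin n)) 1 |
        (∀ b ∈ B₁, (inner ℝ b u : ℝ) > 0) ∧ (∀ b ∈ B₂, (inner ℝ b u : ℝ) < 0)})
    (C : Set (EuclideanSpace ℝ (Fin n)))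
    (hC : C = {y : EuclideanSpace ℝ (Fin n) | ∃ t ≥ (0 : ℝ), ∃ u ∈ E, y = t • u} ∪ {0}) :
    Convex ℝ C ∧ IsClosed C ∧ (∀ t : ℝ, 0 < t → ∀ y ∈ C, t • y ∈ C) ∧
      C ∩ (-C) = {0} := by
  set K := ProperCone.innerDual (B₁ ∪ -B₂)
  have hCK : C = K := by
    rw [hC, hE]
    exact ProperCone.setOf_smul_strictInnerDual_eq ho₁ ho₂
  rw [hCK]
  exact ⟨K.convex, K.isClosed, fun t ht y hy ↦ K.smul_mem hy ht.le,
    ProperCone.inter_neg_innerDual_eq_zero hne₁ Set.subset_union_left ho₁⟩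

theorem stmt_7 {n : ℕ} (hn : 2 ≤ n) (B₁ B₂ : Set (EuclideanSpace ℝ (Fin n)))
    (hB₁ : B₁ ⊆ Metric.sphere (0 : EuclideanSpace ℝ (Fin n)) 1)
    (hB₂ : B₂ ⊆ Metric.sphere (0 : EuclideanSpace ℝ (Fin n)) 1)
    (hne₁ : B₁.Nonempty) (hne₂ : B₂.Nonempty)
    (hc₁ : Convex ℝ {y : EuclideanSpace ℝ (Fin n) | ∃ t > (0 : ℝ), ∃ b ∈ B₁, y = t • b})
    (hc₂ : Convex ℝ {y : EuclideanSpace ℝ (Fin n) | ∃ t > (0 : ℝ), ∃ b ∈ B₂, y = t • b})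
    (ho₁ : IsOpen {y : EuclideanSpace ℝ (Fin n) | ∃ t > (0 : ℝ), ∃ b ∈ B₁, y = t • b})
    (ho₂ : IsOpen {y : EuclideanSpace ℝ (Fin n) | ∃ t > (0 : ℝ), ∃ b ∈ B₂, y = t • b})
    (hdisj : B₁ ∩ B₂ = ∅)
    (E : Set (EuclideanSpace ℝ (Fin n)))
    (hE : E = {u ∈ Metric.sphere (0 : EuclideanSpace ℝ (Fin n)) 1 |
        (∀ b ∈ B₁, (inner ℝ b u : ℝ) > 0) ∧ (∀ b ∈ B₂, (inner ℝ b u : ℝ) < 0)})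
    (C : Set (EuclideanSpace ℝ (Fin n)))
    (hC : C = {y : EuclideanSpace ℝ (Fin n) | ∃ t ≥ (0 : ℝ), ∃ u ∈ E, y = t • u} ∪ {0}) :
    Convex ℝ C ∧ IsClosed C ∧ (∀ t : ℝ, 0 < t → ∀ y ∈ C, t • y ∈ C) ∧
      C ∩ (-C) = {0} :=
  stmt_7_general B₁ B₂ hne₁ ho₁ ho₂ E hE C hC
end

section
/- Let C₁, C₂ ⊆ ℝⁿ be nonempty compact convex sets with 0 ∉ C₁ ∪ C₂ and (ℙ·C₁) ∩ (ℙ·C₂) = ∅. Then there exists r > 0 such that [ℙ·(C₁ + rU)] ∩ [ℙ·(C₂ + rU)] = ∅, where U is the closed unit ball and ℙ·A := {t·a : t > 0, a ∈ A}. -/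
/-!
The radial projection `x ↦ x / ‖x‖` is continuous away from `0`, and two sets avoiding `0` span
disjoint cones exactly when their radial projections are disjoint. The projections of `C₁` and
`C₂` are disjoint compact sets, hence have disjoint open neighbourhoods; by compactness some closed
`r`-thickening of each `Cᵢ` still avoids `0` and projects into the corresponding neighbourhood.
-/

open Pointwise Set Metric

theorem ContinuousOn.exists_cthickening_mapsTo {X Y : Type*} [PseudoMetricSpace X]
    [TopologicalSpace Y] {f : X → Y} {U K : Set X} {V : Set Y} (hf : ContinuousOn f U)
    (hU : IsOpen U) (hK : IsCompact K) (hKU : K ⊆ U) (hV : IsOpen V) (hKV : MapsTo f K V) :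
    ∃ r > 0, cthickening r K ⊆ U ∧ MapsTo f (cthickening r K) V := by
  obtain ⟨r, hr, hrK⟩ :=
    hK.exists_cthickening_subset_open (hf.isOpen_inter_preimage hU hV) fun x hx => ⟨hKU hx, hKV hx⟩
  exact ⟨r, hr, fun x hx => (hrK hx).1, fun x hx => (hrK hx).2⟩

section PosCone

variable {E : Type*} [NormedAddCommGroup E] [NormedSpace ℝ E]

/-- The cone `ℙ·A` of the paper. -/
def posCone (A : Set E) : Set E := {y | ∃ t > (0 : ℝ), ∃ a ∈ A, y = t • a}

theorem disjoint_posCone_iff {A B : Set E} (hA : (0 : E) ∉ A) (hB : (0 : E) ∉ B) :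
    Disjoint (posCone A) (posCone B) ↔
      Disjoint (NormedSpace.normalize '' A) (NormedSpace.normalize '' B) := by
  constructor
  · refine fun h => disjoint_left.mpr ?_
    rintro _ ⟨a, ha, rfl⟩ ⟨b, hb, hab⟩
    have ha0 : a ≠ 0 := fun h => hA (h ▸ ha)
    have hb0 : b ≠ 0 := fun h => hB (h ▸ hb)
    exact disjoint_left.mp h ⟨‖a‖⁻¹, inv_pos.mpr (norm_pos_iff.mpr ha0), a, ha, rfl⟩
      ⟨‖b‖⁻¹, inv_pos.mpr (norm_pos_iff.mpr hb0), b, hb, hab.symm⟩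
  · refine fun h => disjoint_left.mpr ?_
    rintro _ ⟨t, ht, a, ha, rfl⟩ ⟨s, hs, b, hb, hab⟩
    refine disjoint_left.mp h ⟨a, ha, rfl⟩ ⟨b, hb, ?_⟩
    rw [← NormedSpace.normalize_smul_of_pos hs, ← hab, NormedSpace.normalize_smul_of_pos ht]

theorem continuousOn_normalize : ContinuousOn (NormedSpace.normalize : E → E) {0}ᶜ :=
  show ContinuousOn (fun x : E => ‖x‖⁻¹ • x) _ from
  (continuous_norm.continuousOn.inv₀ fun _ hx => norm_ne_zero_iff.mpr hx).smul continuousOn_id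

theorem exists_disjoint_posCone_cthickening {K₁ K₂ : Set E} (hK₁ : IsCompact K₁)
    (hK₂ : IsCompact K₂) (h₁ : (0 : E) ∉ K₁) (h₂ : (0 : E) ∉ K₂)
    (h : Disjoint (posCone K₁) (posCone K₂)) :
    ∃ r > 0, Disjoint (posCone (cthickening r K₁)) (posCone (cthickening r K₂)) := by
  have hKU₁ : K₁ ⊆ {0}ᶜ := subset_compl_singleton_iff.mpr h₁
  have hKU₂ : K₂ ⊆ {0}ᶜ := subset_compl_singleton_iff.mpr h₂
  rw [disjoint_posCone_iff h₁ h₂] at h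
  obtain ⟨V₁, V₂, hV₁, hV₂, hKV₁, hKV₂, hV⟩ := SeparatedNhds.of_isCompact_isCompact
    (hK₁.image_of_continuousOn (continuousOn_normalize.mono hKU₁))
    (hK₂.image_of_continuousOn (continuousOn_normalize.mono hKU₂)) h
  obtain ⟨r₁, hr₁, hU₁, hf₁⟩ := continuousOn_normalize.exists_cthickening_mapsTo
    isOpen_compl_singleton hK₁ hKU₁ hV₁ (mapsTo_iff_image_subset.mpr hKV₁)
  obtain ⟨r₂, hr₂, hU₂, hf₂⟩ := continuousOn_normalize.exists_cthickening_mapsTo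
    isOpen_compl_singleton hK₂ hKU₂ hV₂ (mapsTo_iff_image_subset.mpr hKV₂)
  have hc₁ : cthickening (min r₁ r₂) K₁ ⊆ cthickening r₁ K₁ := cthickening_mono (min_le_left _ _) _
  have hc₂ : cthickening (min r₁ r₂) K₂ ⊆ cthickening r₂ K₂ := cthickening_mono (min_le_right _ _) _
  refine ⟨min r₁ r₂, lt_min hr₁ hr₂, ?_⟩
  rw [disjoint_posCone_iff (fun h => hU₁ (hc₁ h) rfl) (fun h => hU₂ (hc₂ h) rfl)]
  exact hV.mono ((hf₁.mono_left hc₁).image_subset) ((hf₂.mono_left hc₂).image_subset)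

end PosCone

theorem stmt_10_general {n : ℕ} (C₁ C₂ : Set (EuclideanSpace ℝ (Fin n)))
    (hcp₁ : IsCompact C₁) (hcp₂ : IsCompact C₂)
    (h0 : (0 : EuclideanSpace ℝ (Fin n)) ∉ C₁ ∪ C₂)
    (hdisj : {y : EuclideanSpace ℝ (Fin n) | ∃ t > (0 : ℝ), ∃ c ∈ C₁, y = t • c} ∩
             {y : EuclideanSpace ℝ (Fin n) | ∃ t > (0 : ℝ), ∃ c ∈ C₂, y = t • c} = ∅) :
    ∃ r > (0 : ℝ),
      {y : EuclideanSpace ℝ (Fin n) | ∃ t > (0 : ℝ),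
          ∃ a ∈ C₁ + r • Metric.closedBall (0 : EuclideanSpace ℝ (Fin n)) 1, y = t • a} ∩
      {y : EuclideanSpace ℝ (Fin n) | ∃ t > (0 : ℝ),
          ∃ a ∈ C₂ + r • Metric.closedBall (0 : EuclideanSpace ℝ (Fin n)) 1, y = t • a} = ∅ := by
  obtain ⟨r, hr, hdisj_r⟩ := exists_disjoint_posCone_cthickening hcp₁ hcp₂
    (fun h => h0 (Or.inl h)) (fun h => h0 (Or.inr h)) (disjoint_iff_inter_eq_empty.mpr hdisj)
  refine ⟨r, hr, ?_⟩
  rw [smul_unitClosedBall_of_nonneg hr.le, hcp₁.add_closedBall_zero hr.le,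
    hcp₂.add_closedBall_zero hr.le]
  exact disjoint_iff_inter_eq_empty.mp hdisj_r

theorem stmt_10 {n : ℕ} (C₁ C₂ : Set (EuclideanSpace ℝ (Fin n)))
    (hne₁ : C₁.Nonempty) (hne₂ : C₂.Nonempty)
    (hcp₁ : IsCompact C₁) (hcp₂ : IsCompact C₂)
    (hcv₁ : Convex ℝ C₁) (hcv₂ : Convex ℝ C₂)
    (h0 : (0 : EuclideanSpace ℝ (Fin n)) ∉ C₁ ∪ C₂)
    (hdisj : {y : EuclideanSpace ℝ (Fin n) | ∃ t > (0 : ℝ), ∃ c ∈ C₁, y = t • c} ∩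
             {y : EuclideanSpace ℝ (Fin n) | ∃ t > (0 : ℝ), ∃ c ∈ C₂, y = t • c} = ∅) :
    ∃ r > (0 : ℝ),
      {y : EuclideanSpace ℝ (Fin n) | ∃ t > (0 : ℝ),
          ∃ a ∈ C₁ + r • Metric.closedBall (0 : EuclideanSpace ℝ (Fin n)) 1, y = t • a} ∩
      {y : EuclideanSpace ℝ (Fin n) | ∃ t > (0 : ℝ),
          ∃ a ∈ C₂ + r • Metric.closedBall (0 : EuclideanSpace ℝ (Fin n)) 1, y = t • a} = ∅ :=
  stmt_10_general C₁ C₂ hcp₁ hcp₂ h0 hdisj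
end

section
/- Let B ⊆ S^{n-1} be a nonempty closed set such that ℙ·B is convex. Then C := conv(B) is compact, 0 ∉ C, and ℙ·B = ℙ·C. -/
open Pointwise

/-!
By Carathéodory, the convex hull of a compact set in a finite-dimensional space is a
continuous image of `stdSimplex × Bᵐ`, hence compact. Since `ℙ·B` is convex and contains `B`,
it contains `conv B`, so `ℙ·(conv B) ⊆ ℙ·(ℙ·B) = ℙ·B`; and `0 ∉ ℙ·B` because `B` lies on the
unit sphere.
-/

open Module Set

section Caratheodory

variable {𝕜 E : Type*} [Field 𝕜] [LinearOrder 𝕜] [IsStrictOrderedRing 𝕜]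
  [AddCommGroup E] [Module 𝕜 E] [FiniteDimensional 𝕜 E]

theorem mem_convexHull_iff_exists_fin_finrank_succ {s : Set E} (hs : s.Nonempty) {x : E} :
    x ∈ convexHull 𝕜 s ↔ ∃ w ∈ stdSimplex 𝕜 (Fin (finrank 𝕜 E + 1)),
      ∃ z : Fin (finrank 𝕜 E + 1) → E, (∀ i, z i ∈ s) ∧ ∑ i, w i • z i = x := by
  classical
  refine ⟨fun hx => ?_, fun ⟨w, ⟨hw₀, hw₁⟩, z, hz, hx⟩ =>
    mem_convexHull_of_exists_fintype w z hw₀ hw₁ hz hx⟩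
  obtain ⟨b₀, hb₀⟩ := hs
  obtain ⟨ι, _, z, w, hzs, hind, hw₀, hw₁, rfl⟩ := eq_pos_convex_span_of_mem_convexHull hx
  have hcard : Fintype.card ι ≤ Fintype.card (Fin (finrank 𝕜 E + 1)) := by
    simpa using hind.card_le_finrank_succ.trans
      (Nat.add_le_add_right (Submodule.finrank_le _) 1)
  -- pad with zero weights outside the range of an embedding `ι ↪ Fin (finrank 𝕜 E + 1)`
  obtain ⟨g⟩ := Function.Embedding.nonempty_of_card_le hcard
  have hout : ∀ j ∉ range g, Function.extend g w 0 j = 0 := fun j hj =>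
    by rw [Function.extend_apply' _ _ _ (by simpa using hj), Pi.zero_apply]
  refine ⟨Function.extend g w 0, ⟨fun j => ?_, ?_⟩, Function.extend g z fun _ => b₀,
    fun j => ?_, ?_⟩
  · by_cases hj : j ∈ range g
    · obtain ⟨i, rfl⟩ := hj
      rw [g.injective.extend_apply]
      exact (hw₀ i).le
    · rw [hout j hj]
  · rw [← hw₁]
    exact (Fintype.sum_of_injective g g.injective _ _ hout
      fun i => (g.injective.extend_apply _ _ i).symm).symm
  · by_cases hj : ∃ i, g i = j
    · obtain ⟨i, rfl⟩ := hj
      rw [g.injective.extend_apply]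
      exact hzs (mem_range_self i)
    · rwa [Function.extend_apply' _ _ _ hj]
  · refine (Fintype.sum_of_injective g g.injective _ _ (fun j hj => ?_) fun i => ?_).symm
    · rw [hout j hj, zero_smul]
    · rw [g.injective.extend_apply, g.injective.extend_apply]

end Caratheodory

theorem IsCompact.convexHull {E : Type*} [AddCommGroup E] [Module ℝ E] [TopologicalSpace E]
    [ContinuousAdd E] [ContinuousSMul ℝ E] [FiniteDimensional ℝ E] {s : Set E}
    (hs : IsCompact s) : IsCompact (_root_.convexHull ℝ s) := by
  rcases s.eq_empty_or_nonempty with rfl | hne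
  · simp
  set m := finrank ℝ E + 1
  have himage : _root_.convexHull ℝ s =
      (fun p : (Fin m → ℝ) × (Fin m → E) => ∑ i, p.1 i • p.2 i) ''
        (stdSimplex ℝ (Fin m) ×ˢ univ.pi fun _ => s) := by
    ext x
    simp [mem_convexHull_iff_exists_fin_finrank_succ hne, m, and_assoc]
  rw [himage]
  exact ((isCompact_stdSimplex ℝ (Fin m)).prod (isCompact_univ_pi fun _ => hs)).image
    (by fun_prop)

section PositiveCone

variable {E : Type*} [AddCommGroup E] [Module ℝ E]

theorem setOf_exists_pos_smul_eq_Ioi_smul (s : Set E) :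
    {y : E | ∃ t > (0 : ℝ), ∃ b ∈ s, y = t • b} = Ioi (0 : ℝ) • s := by
  ext y
  simp [mem_smul, eq_comm]

theorem subset_Ioi_smul (s : Set E) : s ⊆ Ioi (0 : ℝ) • s :=
  fun b hb => ⟨1, mem_Ioi.2 one_pos, b, hb, one_smul ℝ b⟩

theorem Ioi_smul_Ioi_smul_subset (s : Set E) :
    Ioi (0 : ℝ) • Ioi (0 : ℝ) • s ⊆ Ioi (0 : ℝ) • s := by
  rintro _ ⟨t, ht, _, ⟨u, hu, b, hb, rfl⟩, rfl⟩
  exact ⟨t * u, mem_Ioi.2 (mul_pos ht hu), b, hb, mul_smul t u b⟩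

theorem Ioi_smul_convexHull_eq {s : Set E} (h : Convex ℝ (Ioi (0 : ℝ) • s)) :
    Ioi (0 : ℝ) • convexHull ℝ s = Ioi (0 : ℝ) • s :=
  subset_antisymm
    ((smul_subset_smul_left (convexHull_min (subset_Ioi_smul s) h)).trans
      (Ioi_smul_Ioi_smul_subset s))
    (smul_subset_smul_left (subset_convexHull ℝ s))

theorem zero_notMem_Ioi_smul {s : Set E} (h : (0 : E) ∉ s) : (0 : E) ∉ Ioi (0 : ℝ) • s := by
  rintro ⟨t, ht, b, hb, htb⟩
  rcases smul_eq_zero.mp htb with rfl | rfl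
  exacts [lt_irrefl (0 : ℝ) ht, h hb]

end PositiveCone

theorem stmt_11_general {n : ℕ} (B : Set (EuclideanSpace ℝ (Fin n)))
    (hB : B ⊆ Metric.sphere (0 : EuclideanSpace ℝ (Fin n)) 1)
    (hcl : IsClosed B)
    (hcv : Convex ℝ {y : EuclideanSpace ℝ (Fin n) | ∃ t > (0 : ℝ), ∃ b ∈ B, y = t • b}) :
    IsCompact (convexHull ℝ B) ∧ (0 : EuclideanSpace ℝ (Fin n)) ∉ convexHull ℝ B ∧
    {y : EuclideanSpace ℝ (Fin n) | ∃ t > (0 : ℝ), ∃ b ∈ B, y = t • b} =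
      {y : EuclideanSpace ℝ (Fin n) | ∃ t > (0 : ℝ), ∃ c ∈ convexHull ℝ B, y = t • c} := by
  simp only [setOf_exists_pos_smul_eq_Ioi_smul] at hcv ⊢
  have hcone := Ioi_smul_convexHull_eq hcv
  have hB0 : (0 : EuclideanSpace ℝ (Fin n)) ∉ B := fun h => by simpa using hB h
  refine ⟨((isCompact_sphere _ _).of_isClosed_subset hcl hB).convexHull, fun h0 => ?_,
    hcone.symm⟩
  exact zero_notMem_Ioi_smul hB0 (hcone ▸ subset_Ioi_smul _ h0)

theorem stmt_11 {n : ℕ} (hn : 2 ≤ n) (B : Set (EuclideanSpace ℝ (Fin n)))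
    (hB : B ⊆ Metric.sphere (0 : EuclideanSpace ℝ (Fin n)) 1)
    (hne : B.Nonempty) (hcl : IsClosed B)
    (hcv : Convex ℝ {y : EuclideanSpace ℝ (Fin n) | ∃ t > (0 : ℝ), ∃ b ∈ B, y = t • b}) :
    IsCompact (convexHull ℝ B) ∧ (0 : EuclideanSpace ℝ (Fin n)) ∉ convexHull ℝ B ∧
    {y : EuclideanSpace ℝ (Fin n) | ∃ t > (0 : ℝ), ∃ b ∈ B, y = t • b} =
      {y : EuclideanSpace ℝ (Fin n) | ∃ t > (0 : ℝ), ∃ c ∈ convexHull ℝ B, y = t • c} :=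
  stmt_11_general B hB hcl hcv
end
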